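/- arXiv:2007.07752 — 2 statements merged into one kernel-verified Lean document; each statement's English description precedes it below -/
import Mathlib

section
/- Let F : C → C' be a span tight functor. Then there is a category Span(C, F) whose objects are the objects of C, whose morphisms from X to Y are span-isomorphism classes [S] of spans S in C with S_R = X and S_L = Y, whose composition is defined by [S] ∘ [Q] = [S ∘_P Q] for any F-pullback composite S ∘_P Q of representatives, and whose identity on an object X is the class of the span (Id_X, Id_X). That is: composition is well defined (independent of the chosen representatives and of the chosen F-pullback), it satisfies the left and right unit laws with the identity spans, and it is associative. -/
open CategoryTheory

universe v u v' u'

/-- A span in `C` with left foot `L` and right foot `R`. -/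
structure Span' (C : Type u) [Category.{v} C] (L R : C) where
  apex : C
  left : apex ⟶ L
  right : apex ⟶ R

/-- A cospan in `C` with left foot `L` and right foot `R`. -/
structure Cospan' (C : Type u) [Category.{v} C] (L R : C) where
  coapex : C
  left : L ⟶ coapex
  right : R ⟶ coapex

variable {C : Type u} [Category.{v} C] {C' : Type u'} [Category.{v'} C']

/-- A span is paired with a cospan with the same feet if the resulting square commutes. -/
def PairedWith {L R : C} (S : Span' C L R) (c : Cospan' C L R) : Prop :=
  S.left ≫ c.left = S.right ≫ c.right

/-- A span morphism between spans with the same feet. -/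
def IsSpanMorphism {L R : C} (S Q : Span' C L R) (Φ : S.apex ⟶ Q.apex) : Prop :=
  Φ ≫ Q.left = S.left ∧ Φ ≫ Q.right = S.right

/-- A span isomorphism is a span morphism that is an isomorphism. -/
def IsSpanIso {L R : C} (S Q : Span' C L R) (Φ : S.apex ⟶ Q.apex) : Prop :=
  IsSpanMorphism S Q Φ ∧ IsIso Φ

/-- Two spans are span isomorphic if there is a span isomorphism between them. -/
def SpanIsomorphic {L R : C} (S Q : Span' C L R) : Prop :=
  ∃ Φ : S.apex ⟶ Q.apex, IsSpanIso S Q Φ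

/-- A span `S` is a pullback of a cospan `c` if it is paired with `c` and every span paired
with `c` admits a unique span morphism to `S`. -/
def IsPullbackSpan {L R : C} (S : Span' C L R) (c : Cospan' C L R) : Prop :=
  PairedWith S c ∧ ∀ Q : Span' C L R, PairedWith Q c → ∃! Φ : Q.apex ⟶ S.apex, IsSpanMorphism Q S Φ

/-- The image of a span under a functor. -/
def Span'.map (F : C ⥤ C') {L R : C} (S : Span' C L R) : Span' C' (F.obj L) (F.obj R) :=
  ⟨F.obj S.apex, F.map S.left, F.map S.right⟩

/-- The image of a cospan under a functor. -/
def Cospan'.map (F : C ⥤ C') {L R : C} (c : Cospan' C L R) : Cospan' C' (F.obj L) (F.obj R) :=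
  ⟨F.obj c.coapex, F.map c.left, F.map c.right⟩

/-- A span `S` in `C` is an `F`-pullback of a cospan `c` in `C` if `S` is paired with `c` and
`F(S)` is a pullback of `F(c)` in `C'`. -/
def IsFPullback (F : C ⥤ C') {L R : C} (S : Span' C L R) (c : Cospan' C L R) : Prop :=
  PairedWith S c ∧ IsPullbackSpan (S.map F) (c.map F)

/-- `C` has `F`-pullbacks in `C'`. -/
def HasFPullbacks (F : C ⥤ C') : Prop :=
  ∀ {L R : C} (c : Cospan' C L R), ∃ S : Span' C L R, IsFPullback F S c

/-- `F` is span tight: `C` has `F`-pullbacks in `C'` and every span isomorphism in `C'`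
between the images of two `F`-pullbacks of the same cospan lifts to a span isomorphism in `C`. -/
def SpanTight (F : C ⥤ C') : Prop :=
  HasFPullbacks F ∧ ∀ {L R : C} (c : Cospan' C L R) (S Q : Span' C L R),
    IsFPullback F S c → IsFPullback F Q c →
    ∀ Φ : (S.map F).apex ⟶ (Q.map F).apex, IsSpanIso (S.map F) (Q.map F) Φ →
      ∃ Ψ : S.apex ⟶ Q.apex, IsSpanIso S Q Ψ ∧ F.map Ψ = Φ

/-- The cospan `(s_R, q_L)` associated to two composable spans. -/
def compCospan {L M R : C} (S : Span' C L M) (Q : Span' C M R) : Cospan' C S.apex Q.apex :=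
  ⟨M, S.right, Q.left⟩

/-- The composite of the spans `S` and `Q` along a span `P` paired with `(s_R, q_L)`. -/
def compositeAlong {L M R : C} (S : Span' C L M) (Q : Span' C M R)
    (P : Span' C S.apex Q.apex) : Span' C L R :=
  ⟨P.apex, P.left ≫ S.left, P.right ≫ Q.right⟩

/-- The identity span on an object. -/
def idSpan (X : C) : Span' C X X := ⟨X, 𝟙 X, 𝟙 X⟩

/-!
A span is a pullback in the sense of `IsPullbackSpan` exactly when its square is a Mathlib
`IsPullback`. Hence the images of two `F`-pullbacks of one cospan are related by the canonical
isomorphism of pullbacks, which span tightness lifts to a span isomorphism in `C`: composites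
along different `F`-pullbacks are isomorphic. Well-definedness then follows by composing the legs
of an `F`-pullback with the given span isomorphisms, the unit laws from the `F`-pullback
`(𝟙, s_R)` of `(s_R, 𝟙)` (and its mirror image), and associativity from the pasting lemma:
an `F`-pullback of `(p₁_R, p₄_L)` gives `F`-pullbacks for both bracketings whose composites
differ only by associativity of composition.
-/

namespace SpanIsomorphic

variable {L R : C}

theorem refl (S : Span' C L R) : SpanIsomorphic S S :=
  ⟨𝟙 _, ⟨Category.id_comp _, Category.id_comp _⟩, inferInstance⟩

theorem trans {S Q T : Span' C L R} (hSQ : SpanIsomorphic S Q) (hQT : SpanIsomorphic Q T) :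
    SpanIsomorphic S T := by
  obtain ⟨Φ, ⟨hΦl, hΦr⟩, _⟩ := hSQ
  obtain ⟨Ψ, ⟨hΨl, hΨr⟩, _⟩ := hQT
  exact ⟨Φ ≫ Ψ, ⟨by rw [Category.assoc, hΨl, hΦl], by rw [Category.assoc, hΨr, hΦr]⟩,
    inferInstance⟩

theorem of_legs_eq {A : C} {l l' : A ⟶ L} {r r' : A ⟶ R} (hl : l = l') (hr : r = r') :
    SpanIsomorphic (⟨A, l, r⟩ : Span' C L R) ⟨A, l', r'⟩ := by
  subst hl hr
  exact refl _

theorem compositeAlong {M : C} (S : Span' C L M) (Q : Span' C M R)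
    {P P' : Span' C S.apex Q.apex} (h : SpanIsomorphic P P') :
    SpanIsomorphic (compositeAlong S Q P) (compositeAlong S Q P') := by
  obtain ⟨Φ, ⟨hl, hr⟩, hΦ⟩ := h
  exact ⟨Φ, ⟨by simp only [_root_.compositeAlong, ← Category.assoc, hl],
    by simp only [_root_.compositeAlong, ← Category.assoc, hr]⟩, hΦ⟩

end SpanIsomorphic

theorem isPullbackSpan_iff_isPullback {L R : C} {S : Span' C L R} {c : Cospan' C L R} :
    IsPullbackSpan S c ↔ IsPullback S.left S.right c.left c.right := by
  constructor
  · rintro ⟨hw, huniv⟩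
    choose lift hlift huniq using
      fun s : Limits.PullbackCone c.left c.right => huniv ⟨s.pt, s.fst, s.snd⟩ s.condition
    exact IsPullback.of_isLimit' ⟨hw⟩ (Limits.PullbackCone.IsLimit.mk hw lift
      (fun s => (hlift s).1) (fun s => (hlift s).2) (fun s m hl hr => huniq s m ⟨hl, hr⟩))
  · intro h
    exact ⟨h.w, fun Q hQ => ⟨h.lift Q.left Q.right hQ, ⟨h.lift_fst _ _ _, h.lift_snd _ _ _⟩,
      fun Φ ⟨hl, hr⟩ => h.hom_ext (hl.trans (h.lift_fst _ _ _).symm)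
        (hr.trans (h.lift_snd _ _ _).symm)⟩⟩

theorem isFPullback_iff (F : C ⥤ C') {L R : C} {S : Span' C L R} {c : Cospan' C L R} :
    IsFPullback F S c ↔
      PairedWith S c ∧ IsPullback (F.map S.left) (F.map S.right) (F.map c.left) (F.map c.right) :=
  and_congr_right' isPullbackSpan_iff_isPullback

namespace IsFPullback

variable {F : C ⥤ C'}

theorem of_isIso_left {L R : C} {S : Span' C L R} {c : Cospan' C L R} [IsIso S.left]
    [IsIso c.right] (h : PairedWith S c) : IsFPullback F S c :=
  (isFPullback_iff F).2 ⟨h, IsPullback.of_horiz_isIso ⟨by rw [← F.map_comp, ← F.map_comp, h]⟩⟩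

theorem of_isIso_right {L R : C} {S : Span' C L R} {c : Cospan' C L R} [IsIso S.right]
    [IsIso c.left] (h : PairedWith S c) : IsFPullback F S c :=
  (isFPullback_iff F).2 ⟨h, IsPullback.of_vert_isIso ⟨by rw [← F.map_comp, ← F.map_comp, h]⟩⟩

theorem transport {L M R : C} {S₁ S₂ : Span' C L M} {Q₁ Q₂ : Span' C M R}
    {Φ : S₁.apex ⟶ S₂.apex} {Ψ : Q₁.apex ⟶ Q₂.apex} (hΦ : IsSpanIso S₁ S₂ Φ)
    (hΨ : IsSpanIso Q₁ Q₂ Ψ) {P : Span' C S₁.apex Q₁.apex}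
    (hP : IsFPullback F P (compCospan S₁ Q₁)) :
    IsFPullback F ⟨P.apex, P.left ≫ Φ, P.right ≫ Ψ⟩ (compCospan S₂ Q₂) := by
  obtain ⟨⟨-, hΦr⟩, _⟩ := hΦ
  obtain ⟨⟨hΨl, -⟩, _⟩ := hΨ
  obtain ⟨hw, hFP⟩ := (isFPullback_iff F).1 hP
  refine (isFPullback_iff F).2 ⟨?_, ?_⟩
  · simpa only [PairedWith, compCospan, Category.assoc, hΦr, hΨl] using hw
  · refine hFP.of_iso (Iso.refl _) (F.mapIso (asIso Φ)) (F.mapIso (asIso Ψ)) (Iso.refl _)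
      ?_ ?_ ?_ ?_ <;>
    simp only [compCospan, Functor.mapIso_hom, asIso_hom, Iso.refl_hom, Category.id_comp,
      Category.comp_id, ← F.map_comp, hΦr, hΨl]

theorem paste_right {L M₁ M₂ R : C} {S : Span' C L M₁} {Q : Span' C M₁ M₂} {T : Span' C M₂ R}
    {P₁ : Span' C S.apex Q.apex} {P₄ : Span' C Q.apex T.apex}
    {P₅ : Span' C P₁.apex P₄.apex} (h₄ : IsFPullback F P₄ (compCospan Q T))
    (h₅ : IsFPullback F P₅ (compCospan P₁ P₄)) :
    IsFPullback F ⟨P₅.apex, P₅.left, P₅.right ≫ P₄.right⟩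
      (compCospan (compositeAlong S Q P₁) T) := by
  obtain ⟨hw₄, hF₄⟩ := (isFPullback_iff F).1 h₄
  obtain ⟨hw₅, hF₅⟩ := (isFPullback_iff F).1 h₅
  refine (isFPullback_iff F).2 ⟨?_, ?_⟩
  · simp only [PairedWith, compCospan, compositeAlong] at hw₄ hw₅ ⊢
    rw [reassoc_of% hw₅, hw₄, Category.assoc]
  · simpa only [compCospan, compositeAlong, F.map_comp] using hF₅.paste_vert hF₄

theorem paste_left {L M₁ M₂ R : C} {S : Span' C L M₁} {Q : Span' C M₁ M₂} {T : Span' C M₂ R}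
    {P₁ : Span' C S.apex Q.apex} {P₄ : Span' C Q.apex T.apex}
    {P₅ : Span' C P₁.apex P₄.apex} (h₁ : IsFPullback F P₁ (compCospan S Q))
    (h₅ : IsFPullback F P₅ (compCospan P₁ P₄)) :
    IsFPullback F ⟨P₅.apex, P₅.left ≫ P₁.left, P₅.right⟩
      (compCospan S (compositeAlong Q T P₄)) := by
  obtain ⟨hw₁, hF₁⟩ := (isFPullback_iff F).1 h₁
  obtain ⟨hw₅, hF₅⟩ := (isFPullback_iff F).1 h₅
  refine (isFPullback_iff F).2 ⟨?_, ?_⟩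
  · simp only [PairedWith, compCospan, compositeAlong] at hw₁ hw₅ ⊢
    rw [Category.assoc, hw₁, reassoc_of% hw₅]
  · simpa only [compCospan, compositeAlong, F.map_comp] using hF₅.paste_horiz hF₁

end IsFPullback

namespace SpanTight

variable {F : C ⥤ C'}

theorem spanIsomorphic_of_isFPullback (hF : SpanTight F) {L R : C}
    {c : Cospan' C L R} {S Q : Span' C L R} (hS : IsFPullback F S c) (hQ : IsFPullback F Q c) :
    SpanIsomorphic S Q := by
  have hFS := ((isFPullback_iff F).1 hS).2
  have hFQ := ((isFPullback_iff F).1 hQ).2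
  obtain ⟨Ψ, hΨ, -⟩ := hF.2 c S Q hS hQ (hFS.isoIsPullback _ _ hFQ).hom
    ⟨⟨hFS.isoIsPullback_hom_fst _ _ hFQ, hFS.isoIsPullback_hom_snd _ _ hFQ⟩, Iso.isIso_hom _⟩
  exact ⟨Ψ, hΨ⟩

theorem compositeAlong_spanIsomorphic (hF : SpanTight F) {L M R : C}
    {S₁ S₂ : Span' C L M} {Q₁ Q₂ : Span' C M R} {P₁ : Span' C S₁.apex Q₁.apex}
    {P₂ : Span' C S₂.apex Q₂.apex} (hP₁ : IsFPullback F P₁ (compCospan S₁ Q₁))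
    (hP₂ : IsFPullback F P₂ (compCospan S₂ Q₂)) (hS : SpanIsomorphic S₁ S₂)
    (hQ : SpanIsomorphic Q₁ Q₂) :
    SpanIsomorphic (compositeAlong S₁ Q₁ P₁) (compositeAlong S₂ Q₂ P₂) := by
  obtain ⟨Φ, hΦ⟩ := hS
  obtain ⟨Ψ, hΨ⟩ := hQ
  have hP := hF.spanIsomorphic_of_isFPullback (IsFPullback.transport hΦ hΨ hP₁) hP₂
  refine .trans (.of_legs_eq ?_ ?_) (.compositeAlong S₂ Q₂ hP)
  · rw [Category.assoc, hΦ.1.1]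
  · rw [Category.assoc, hΨ.1.2]

theorem compositeAlong_idSpan_right (hF : SpanTight F) {L R : C} {S : Span' C L R}
    {P : Span' C S.apex (idSpan R).apex} (hP : IsFPullback F P (compCospan S (idSpan R))) :
    SpanIsomorphic (compositeAlong S (idSpan R) P) S := by
  have hP₀ : IsFPullback F (⟨S.apex, 𝟙 _, S.right⟩ : Span' C S.apex (idSpan R).apex)
      (compCospan S (idSpan R)) :=
    IsFPullback.of_isIso_left (c := ⟨R, S.right, 𝟙 R⟩) (by simp [PairedWith])
  exact .trans (.compositeAlong S (idSpan R) (hF.spanIsomorphic_of_isFPullback hP hP₀))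
    (.of_legs_eq (Category.id_comp _) (Category.comp_id _))

theorem compositeAlong_idSpan_left (hF : SpanTight F) {L R : C} {S : Span' C L R}
    {P : Span' C (idSpan L).apex S.apex} (hP : IsFPullback F P (compCospan (idSpan L) S)) :
    SpanIsomorphic (compositeAlong (idSpan L) S P) S := by
  have hP₀ : IsFPullback F (⟨S.apex, S.left, 𝟙 _⟩ : Span' C (idSpan L).apex S.apex)
      (compCospan (idSpan L) S) :=
    IsFPullback.of_isIso_right (c := ⟨L, 𝟙 L, S.left⟩) (by simp [PairedWith])
  exact .trans (.compositeAlong (idSpan L) S (hF.spanIsomorphic_of_isFPullback hP hP₀))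
    (.of_legs_eq (Category.comp_id _) (Category.id_comp _))

theorem compositeAlong_assoc (hF : SpanTight F) {L M₁ M₂ R : C} {S : Span' C L M₁}
    {Q : Span' C M₁ M₂} {T : Span' C M₂ R} {P₁ : Span' C S.apex Q.apex}
    {P₄ : Span' C Q.apex T.apex} {P₂ : Span' C (compositeAlong S Q P₁).apex T.apex}
    {P₃ : Span' C S.apex (compositeAlong Q T P₄).apex}
    (hP₁ : IsFPullback F P₁ (compCospan S Q)) (hP₄ : IsFPullback F P₄ (compCospan Q T))
    (hP₂ : IsFPullback F P₂ (compCospan (compositeAlong S Q P₁) T))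
    (hP₃ : IsFPullback F P₃ (compCospan S (compositeAlong Q T P₄))) :
    SpanIsomorphic (compositeAlong (compositeAlong S Q P₁) T P₂)
      (compositeAlong S (compositeAlong Q T P₄) P₃) := by
  obtain ⟨P₅, hP₅⟩ := hF.1 (compCospan P₁ P₄)
  have hright := hF.spanIsomorphic_of_isFPullback hP₂ (IsFPullback.paste_right (S := S) hP₄ hP₅)
  have hleft := hF.spanIsomorphic_of_isFPullback (IsFPullback.paste_left (T := T) hP₁ hP₅) hP₃
  have hpasted : SpanIsomorphic
      (compositeAlong (compositeAlong S Q P₁) T ⟨P₅.apex, P₅.left, P₅.right ≫ P₄.right⟩)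
      (compositeAlong S (compositeAlong Q T P₄) ⟨P₅.apex, P₅.left ≫ P₁.left, P₅.right⟩) :=
    .of_legs_eq (Category.assoc _ _ _).symm (Category.assoc _ _ _)
  exact ((SpanIsomorphic.compositeAlong _ T hright).trans hpasted).trans
    (.compositeAlong S _ hleft)

end SpanTight

/-- If `F` is span tight then `Span(C, F)` is a category: composition of isomorphism classes
of spans by `F`-pullback composites is well defined (independent of the chosen representatives
and of the chosen `F`-pullback), satisfies the right and left unit laws with the identity
spans, and is associative. -/
theorem stmt10 (F : C ⥤ C') (hF : SpanTight F) :
    -- composition is well defined on span-isomorphism classes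
    (∀ {L M R : C} (S1 S2 : Span' C L M) (Q1 Q2 : Span' C M R)
        (P1 : Span' C S1.apex Q1.apex) (P2 : Span' C S2.apex Q2.apex),
        IsFPullback F P1 (compCospan S1 Q1) → IsFPullback F P2 (compCospan S2 Q2) →
        SpanIsomorphic S1 S2 → SpanIsomorphic Q1 Q2 →
        SpanIsomorphic (compositeAlong S1 Q1 P1) (compositeAlong S2 Q2 P2)) ∧
    -- right unit law
    (∀ {L R : C} (S : Span' C L R) (P : Span' C S.apex (idSpan R).apex),
        IsFPullback F P (compCospan S (idSpan R)) →
        SpanIsomorphic (compositeAlong S (idSpan R) P) S) ∧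
    -- left unit law
    (∀ {L R : C} (S : Span' C L R) (P : Span' C (idSpan L).apex S.apex),
        IsFPullback F P (compCospan (idSpan L) S) →
        SpanIsomorphic (compositeAlong (idSpan L) S P) S) ∧
    -- associativity
    (∀ {L M1 M2 R : C} (S : Span' C L M1) (Q : Span' C M1 M2) (T : Span' C M2 R)
        (P1 : Span' C S.apex Q.apex), IsFPullback F P1 (compCospan S Q) →
        ∀ P4 : Span' C Q.apex T.apex, IsFPullback F P4 (compCospan Q T) →
        ∀ P2 : Span' C (compositeAlong S Q P1).apex T.apex,
          IsFPullback F P2 (compCospan (compositeAlong S Q P1) T) →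
        ∀ P3 : Span' C S.apex (compositeAlong Q T P4).apex,
          IsFPullback F P3 (compCospan S (compositeAlong Q T P4)) →
        SpanIsomorphic (compositeAlong (compositeAlong S Q P1) T P2)
          (compositeAlong S (compositeAlong Q T P4) P3)) :=
  ⟨fun _ _ _ _ _ _ hP₁ hP₂ hS hQ => hF.compositeAlong_spanIsomorphic hP₁ hP₂ hS hQ,
    fun _ _ hP => hF.compositeAlong_idSpan_right hP,
    fun _ _ hP => hF.compositeAlong_idSpan_left hP,
    fun _ _ _ _ hP₁ _ hP₄ _ hP₂ _ hP₃ => hF.compositeAlong_assoc hP₁ hP₄ hP₂ hP₃⟩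
end

section
/- Let F : C → C' be a span tight functor and let S be a span in C. Then the F-pullback composite of S with the identity span (Id_{S_R}, Id_{S_R}) along any F-pullback of the cospan (s_R, Id_{S_R}) is span isomorphic in C to S; likewise the F-pullback composite of the identity span (Id_{S_L}, Id_{S_L}) with S along any F-pullback of the cospan (Id_{S_L}, s_L) is span isomorphic in C to S. -/
open CategoryTheory

universe v u v' u'

variable {C : Type u} [Category.{v} C] {C' : Type u'} [Category.{v'} C']

/-
Both unit laws rest on the same observation: for `f : X ⟶ Y` the span `(𝟙 X, f)` is a pullback
of the cospan `(f, 𝟙 Y)`, in any category, so it is an `F`-pullback of `(f, 𝟙 Y)` for every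
functor `F`. Since pullbacks are unique up to span isomorphism, span tightness lifts the span
isomorphism between `F(P)` and `F(𝟙, s_R)` to one between `P` and `(𝟙, s_R)`; its underlying
morphism is then `p_L`, and it is a span isomorphism from `S ∘_P (𝟙, 𝟙)` to `S`.
-/

lemma IsPullbackSpan.exists_spanIso {D : Type*} [Category D] {L R : D}
    {S Q : Span' D L R} {c : Cospan' D L R}
    (hS : IsPullbackSpan S c) (hQ : IsPullbackSpan Q c) :
    ∃ Φ : S.apex ⟶ Q.apex, IsSpanIso S Q Φ := by
  obtain ⟨φ, hφ, -⟩ := hQ.2 S hS.1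
  obtain ⟨ψ, hψ, -⟩ := hS.2 Q hQ.1
  obtain ⟨_, _, huS⟩ := hS.2 S hS.1
  obtain ⟨_, _, huQ⟩ := hQ.2 Q hQ.1
  have hφψ : φ ≫ ψ = 𝟙 S.apex := by
    rw [huS (φ ≫ ψ) ⟨by rw [Category.assoc, hψ.1, hφ.1], by rw [Category.assoc, hψ.2, hφ.2]⟩,
      huS (𝟙 S.apex) ⟨Category.id_comp _, Category.id_comp _⟩]
  have hψφ : ψ ≫ φ = 𝟙 Q.apex := by
    rw [huQ (ψ ≫ φ) ⟨by rw [Category.assoc, hφ.1, hψ.1], by rw [Category.assoc, hφ.2, hψ.2]⟩,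
      huQ (𝟙 Q.apex) ⟨Category.id_comp _, Category.id_comp _⟩]
  exact ⟨φ, hφ, ⟨ψ, hφψ, hψφ⟩⟩

lemma SpanTight.exists_spanIso {F : C ⥤ C'} (hF : SpanTight F) {L R : C}
    {S Q : Span' C L R} {c : Cospan' C L R} (hS : IsFPullback F S c) (hQ : IsFPullback F Q c) :
    SpanIsomorphic S Q := by
  obtain ⟨Φ, hΦ⟩ := hS.2.exists_spanIso hQ.2
  obtain ⟨Ψ, hΨ, -⟩ := hF.2 c S Q hS hQ Φ hΦ
  exact ⟨Ψ, hΨ⟩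

lemma isPullbackSpan_id_left {D : Type*} [Category D] {X Y : D} (f : X ⟶ Y) :
    IsPullbackSpan (⟨X, 𝟙 X, f⟩ : Span' D X Y) ⟨Y, f, 𝟙 Y⟩ := by
  refine ⟨by simp [PairedWith], fun Q hQ => ⟨Q.left, ⟨Category.comp_id _, ?_⟩, ?_⟩⟩
  · simpa [PairedWith] using hQ
  · rintro Φ ⟨hΦ, -⟩
    simpa using hΦ

lemma isPullbackSpan_id_right {D : Type*} [Category D] {X Y : D} (f : X ⟶ Y) :
    IsPullbackSpan (⟨X, f, 𝟙 X⟩ : Span' D Y X) ⟨Y, 𝟙 Y, f⟩ := by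
  refine ⟨by simp [PairedWith], fun Q hQ => ⟨Q.right, ⟨?_, Category.comp_id _⟩, ?_⟩⟩
  · simpa [PairedWith] using hQ.symm
  · rintro Φ ⟨-, hΦ⟩
    simpa using hΦ

lemma isFPullback_id_left (F : C ⥤ C') {X Y : C} (f : X ⟶ Y) :
    IsFPullback F (⟨X, 𝟙 X, f⟩ : Span' C X Y) ⟨Y, f, 𝟙 Y⟩ := by
  refine ⟨by simp [PairedWith], ?_⟩
  simpa only [Span'.map, Cospan'.map, F.map_id] using isPullbackSpan_id_left (F.map f)

lemma isFPullback_id_right (F : C ⥤ C') {X Y : C} (f : X ⟶ Y) :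
    IsFPullback F (⟨X, f, 𝟙 X⟩ : Span' C Y X) ⟨Y, 𝟙 Y, f⟩ := by
  refine ⟨by simp [PairedWith], ?_⟩
  simpa only [Span'.map, Cospan'.map, F.map_id] using isPullbackSpan_id_right (F.map f)

lemma SpanTight.compositeAlong_idSpan_right_s12 {F : C ⥤ C'} (hF : SpanTight F) {L R : C}
    (S : Span' C L R) (P : Span' C S.apex R) (hP : IsFPullback F P (compCospan S (idSpan R))) :
    SpanIsomorphic (compositeAlong S (idSpan R) P) S := by
  obtain ⟨Ψ, ⟨hΨl, hΨr⟩, hΨ⟩ := hF.exists_spanIso hP (isFPullback_id_left F S.right)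
  have hΨ_eq : Ψ = P.left := by simpa using hΨl
  refine ⟨Ψ, ⟨?_, ?_⟩, hΨ⟩
  · simp [compositeAlong, hΨ_eq]
  · simpa [compositeAlong, idSpan] using hΨr

lemma SpanTight.compositeAlong_idSpan_left_s12 {F : C ⥤ C'} (hF : SpanTight F) {L R : C}
    (S : Span' C L R) (P : Span' C L S.apex) (hP : IsFPullback F P (compCospan (idSpan L) S)) :
    SpanIsomorphic (compositeAlong (idSpan L) S P) S := by
  obtain ⟨Ψ, ⟨hΨl, hΨr⟩, hΨ⟩ := hF.exists_spanIso hP (isFPullback_id_right F S.left)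
  have hΨ_eq : Ψ = P.right := by simpa using hΨr
  refine ⟨Ψ, ⟨?_, ?_⟩, hΨ⟩
  · simpa [compositeAlong, idSpan] using hΨl
  · simp [compositeAlong, hΨ_eq]

/-- Unit laws: the `F`-pullback composite of a span `S` with the identity span on `S_R`
(resp. of the identity span on `S_L` with `S`) is span isomorphic to `S`. -/
theorem stmt12 (F : C ⥤ C') (hF : SpanTight F) {L R : C} (S : Span' C L R) :
    (∀ P : Span' C S.apex (idSpan R).apex, IsFPullback F P (compCospan S (idSpan R)) →
      SpanIsomorphic (compositeAlong S (idSpan R) P) S) ∧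
    (∀ P : Span' C (idSpan L).apex S.apex, IsFPullback F P (compCospan (idSpan L) S) →
      SpanIsomorphic (compositeAlong (idSpan L) S P) S) :=
  ⟨hF.compositeAlong_idSpan_right_s12 S, hF.compositeAlong_idSpan_left_s12 S⟩
end
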